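/- Smoothness of F relative to W2²: assume F ∈ C¹ (admits a flat derivative), F is Wasserstein differentiable with ∇_μF(μ) = ∇(δF/δμ)(μ,·) bounded and jointly continuous, and ∇_μF is Lipschitz: |∇_μF(μ')(x') − ∇_μF(μ)(x)| ≤ L_F'(|x'−x| + W2(μ',μ)) for all μ,μ',x,x'. Then for any μ, μ' ∈ P2(R^d) and any measurable map P with P_#μ = μ': F(μ') − F(μ) − ⟨∇_μF(μ), P − Id⟩_{L²_μ} ≤ L_F' · ∫ |x − P(x)|² μ(dx). If moreover P is an optimal transport map from μ to μ', then ∫ |x − P(x)|² μ(dx) = W2²(μ',μ). -/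

import Mathlib

open MeasureTheory Filter Set
open scoped ENNReal NNReal Topology RealInnerProductSpace Classical

noncomputable section

/-- Euclidean space `ℝ^d`. -/
abbrev Ed (d : ℕ) := EuclideanSpace ℝ (Fin d)

/-- `μ` is a probability measure on `ℝ^d` with finite second moment (i.e. `μ ∈ P₂(ℝ^d)`). -/
def P2 {d : ℕ} (μ : Measure (Ed d)) : Prop :=
  IsProbabilityMeasure μ ∧ Integrable (fun x => ‖x‖ ^ 2) μ

/-- `γ` is a coupling of `μ` and `ν`. -/
def IsCoupling {d : ℕ} (γ : Measure (Ed d × Ed d)) (μ ν : Measure (Ed d)) : Prop :=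
  γ.map Prod.fst = μ ∧ γ.map Prod.snd = ν

/-- The squared 2-Wasserstein distance `W₂²(μ,ν)`. -/
def W2sq {d : ℕ} (μ ν : Measure (Ed d)) : ℝ :=
  sInf { r : ℝ | ∃ γ : Measure (Ed d × Ed d), IsCoupling γ μ ν ∧
      Integrable (fun p => ‖p.1 - p.2‖ ^ 2) γ ∧ r = ∫ p, ‖p.1 - p.2‖ ^ 2 ∂γ }

/-- The 2-Wasserstein distance `W₂(μ,ν)`. -/
def W2 {d : ℕ} (μ ν : Measure (Ed d)) : ℝ := Real.sqrt (W2sq μ ν)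

/-- `T` is an optimal transport map from `μ` to `ν`. -/
def IsOptimalMap {d : ℕ} (μ ν : Measure (Ed d)) (T : Ed d → Ed d) : Prop :=
  Measurable T ∧ μ.map T = ν ∧ Integrable (fun x => ‖x - T x‖ ^ 2) μ ∧
    ∫ x, ‖x - T x‖ ^ 2 ∂μ = W2sq μ ν

/-- The Kullback–Leibler divergence `KL(μ|π)`, equal to `+∞` unless `μ ≪ π` and the
relative entropy integral makes sense. -/
def KL {d : ℕ} (μ π : Measure (Ed d)) : ℝ≥0∞ :=
  if μ ≪ π ∧ Integrable (fun x => Real.log ((μ.rnDeriv π x).toReal)) μ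
  then ENNReal.ofReal (∫ x, Real.log ((μ.rnDeriv π x).toReal) ∂μ)
  else ⊤

/-- `g` is a weak (distributional) gradient of `f : ℝ^d → ℝ`. -/
def HasWeakGradient {d : ℕ} (f : Ed d → ℝ) (g : Ed d → Ed d) : Prop :=
  ∀ φ : Ed d → ℝ, ContDiff ℝ (⊤ : ℕ∞) φ → HasCompactSupport φ →
    ∫ x, f x • gradient φ x = - ∫ x, φ x • g x

/-- Relative Fisher information `I(μ|ν) = ∫ |∇ log (dμ/dν)|² dμ = 4 ∫ |∇ √(dμ/dν)|² dν`,
equal to `+∞` unless `μ ≪ ν` and `√(dμ/dν)` has a weak gradient. -/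
def FisherInfo {d : ℕ} (μ ν : Measure (Ed d)) : ℝ≥0∞ :=
  if μ ≪ ν then
    sInf { r : ℝ≥0∞ | ∃ g : Ed d → Ed d,
      HasWeakGradient (fun x => Real.sqrt ((μ.rnDeriv ν x).toReal)) g ∧
      r = 4 * ∫⁻ x, (‖g x‖₊ : ℝ≥0∞) ^ 2 ∂ν }
  else ⊤

/-- The Sobolev regularity class `𝔠 = { m ∈ P₂ : m ≪ π, dm/dπ ∈ W^{1,1}_loc,
√(dm/dπ) ∈ W^{1,2}_π }`. -/
def ClassC {d : ℕ} (π m : Measure (Ed d)) : Prop :=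
  P2 m ∧ m ≪ π ∧
  (LocallyIntegrable (fun x => (m.rnDeriv π x).toReal) volume ∧
    ∃ g : Ed d → Ed d, LocallyIntegrable g volume ∧
      HasWeakGradient (fun x => (m.rnDeriv π x).toReal) g) ∧
  (MemLp (fun x => Real.sqrt ((m.rnDeriv π x).toReal)) 2 π ∧
    ∃ h : Ed d → Ed d, MemLp h 2 π ∧
      HasWeakGradient (fun x => Real.sqrt ((m.rnDeriv π x).toReal)) h)

/-- `DF` is the flat (linear functional) derivative of `F` on `P₂(ℝ^d)`. -/
structure IsFlatDeriv {d : ℕ} (F : Measure (Ed d) → ℝ)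
    (DF : Measure (Ed d) → Ed d → ℝ) : Prop where
  growth : ∃ κ > (0 : ℝ), ∀ (μ : Measure (Ed d)) (x : Ed d), P2 μ →
    |DF μ x| ≤ κ * (1 + ‖x‖ ^ 2)
  limit : ∀ μ μ' : Measure (Ed d), P2 μ → P2 μ' →
    Tendsto (fun ε : ℝ =>
        (F (ENNReal.ofReal (1 - ε) • μ + ENNReal.ofReal ε • μ') - F μ) / ε)
      (nhdsWithin 0 (Set.Ioi 0))
      (nhds ((∫ x, DF μ x ∂μ') - ∫ x, DF μ x ∂μ))
  centered : ∀ μ : Measure (Ed d), P2 μ → (∫ x, DF μ x ∂μ) = 0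

/-- Flat convexity of `F`: `F(μ') - F(μ) ≥ ∫ δF/δμ(μ,x) (μ'-μ)(dx)`. -/
def FlatConvex {d : ℕ} (F : Measure (Ed d) → ℝ)
    (DF : Measure (Ed d) → Ed d → ℝ) : Prop :=
  ∀ μ μ' : Measure (Ed d), P2 μ → P2 μ' →
    (∫ x, DF μ x ∂μ') - (∫ x, DF μ x ∂μ) ≤ F μ' - F μ

/-- Lipschitz continuity of the flat derivative. -/
def FlatLip {d : ℕ} (DF : Measure (Ed d) → Ed d → ℝ) (L : ℝ) : Prop :=
  ∀ (μ μ' : Measure (Ed d)) (x x' : Ed d), P2 μ → P2 μ' →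
    |DF μ' x' - DF μ x| ≤ L * (‖x' - x‖ + W2 μ' μ)

/-- Boundedness of the flat derivative. -/
def FlatBdd {d : ℕ} (DF : Measure (Ed d) → Ed d → ℝ) (C : ℝ) : Prop :=
  ∀ (μ : Measure (Ed d)) (x : Ed d), P2 μ → |DF μ x| ≤ C

/-- Lipschitz continuity of the Wasserstein gradient. -/
def GradLip {d : ℕ} (G : Measure (Ed d) → Ed d → Ed d) (L : ℝ) : Prop :=
  ∀ (μ μ' : Measure (Ed d)) (x x' : Ed d), P2 μ → P2 μ' →
    ‖G μ' x' - G μ x‖ ≤ L * (‖x' - x‖ + W2 μ' μ)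

/-- Joint continuity of the Wasserstein gradient in `(μ,x)` with respect to
the product of the `W₂` and norm topologies. -/
def GradJointCont {d : ℕ} (G : Measure (Ed d) → Ed d → Ed d) : Prop :=
  ∀ (μ : Measure (Ed d)) (x : Ed d), P2 μ → ∀ ε > (0 : ℝ), ∃ δ > (0 : ℝ),
    ∀ (μ' : Measure (Ed d)) (x' : Ed d), P2 μ' →
      W2 μ' μ < δ → ‖x' - x‖ < δ → ‖G μ' x' - G μ x‖ < ε

/-- The normalized Gibbs measure with potential `V`, i.e. `Z⁻¹ e^{-V(x)} dx`. -/
def gibbs {d : ℕ} (V : Ed d → ℝ) : Measure (Ed d) :=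
  volume.withDensity (fun x => ENNReal.ofReal (Real.exp (-V x) / ∫ y, Real.exp (-V y)))

/-- The proximal Gibbs measure `Φ[μ] ∝ e^{-σ⁻¹ δF/δμ(μ,·) - U}`. -/
def proxGibbs {d : ℕ} (DF : Measure (Ed d) → Ed d → ℝ) (U : Ed d → ℝ) (σ : ℝ)
    (μ : Measure (Ed d)) : Measure (Ed d) :=
  gibbs (fun x => σ⁻¹ * DF μ x + U x)

/-- The entropy-regularized objective `F^σ(μ) = F(μ) + σ KL(μ|π)`, with values in `EReal`. -/
def FSigma {d : ℕ} (F : Measure (Ed d) → ℝ) (π : Measure (Ed d)) (σ : ℝ)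
    (μ : Measure (Ed d)) : EReal :=
  (F μ : EReal) + (σ : EReal) * (KL μ π : EReal)

/-- The objective of one proximal point (JKO) step with base point `μprev`. -/
def JKOprox {d : ℕ} (F : Measure (Ed d) → ℝ) (π : Measure (Ed d)) (σ τ : ℝ)
    (μprev μ : Measure (Ed d)) : EReal :=
  (F μ : EReal) + (σ : EReal) * (KL μ π : EReal)
    + ((W2sq μ μprev / (2 * τ) : ℝ) : EReal)

/-- The objective of one prox-linear step with base point `μprev`. -/
def JKOlin {d : ℕ} (DF : Measure (Ed d) → Ed d → ℝ) (π : Measure (Ed d)) (σ τ : ℝ)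
    (μprev μ : Measure (Ed d)) : EReal :=
  (((∫ x, DF μprev x ∂μ) - ∫ x, DF μprev x ∂μprev : ℝ) : EReal)
    + (σ : EReal) * (KL μ π : EReal) + ((W2sq μ μprev / (2 * τ) : ℝ) : EReal)

/-- The objective of the JKO step of the proximal gradient scheme, with base point `νnew`. -/
def JKOgrad {d : ℕ} (π : Measure (Ed d)) (σ τ : ℝ)
    (νnew μ : Measure (Ed d)) : EReal :=
  (σ : EReal) * (KL μ π : EReal) + ((W2sq μ νnew / (2 * τ) : ℝ) : EReal)

/-- `U` is bounded below. -/
def UBoundedBelow {d : ℕ} (U : Ed d → ℝ) : Prop := ∃ c : ℝ, ∀ x, c ≤ U x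

/-- `U` has at least quadratic growth at infinity. -/
def UQuadGrowth {d : ℕ} (U : Ed d → ℝ) : Prop :=
  ∃ c > (0 : ℝ), ∃ R : ℝ, ∀ x : Ed d, R ≤ ‖x‖ → c * ‖x‖ ^ 2 ≤ U x

/-- `U` is `α`-strongly convex (monotonicity of the gradient). -/
def StronglyConvexPot {d : ℕ} (U : Ed d → ℝ) (α : ℝ) : Prop :=
  ∀ x y : Ed d, α * ‖x - y‖ ^ 2 ≤ ⟪x - y, gradient U x - gradient U y⟫

def mixM {d : ℕ} (ν₀ ν₁ : Measure (Ed d)) (l : ℝ) : Measure (Ed d) :=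
  ENNReal.ofReal (1 - l) • ν₀ + ENNReal.ofReal l • ν₁

lemma mixM_P2 {d : ℕ} {ν₀ ν₁ : Measure (Ed d)} (h₀ : P2 ν₀) (h₁ : P2 ν₁)
    {l : ℝ} (hl : 0 ≤ l) (hl1 : l ≤ 1) : P2 (mixM ν₀ ν₁ l) := by
  obtain ⟨hp₀, hi₀⟩ := h₀
  obtain ⟨hp₁, hi₁⟩ := h₁
  constructor
  · refine ⟨?_⟩
    rw [mixM, Measure.add_apply, Measure.smul_apply, Measure.smul_apply,
      measure_univ, measure_univ, smul_eq_mul, smul_eq_mul, mul_one, mul_one,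
      ← ENNReal.ofReal_add (by linarith) hl]
    norm_num
  · exact (hi₀.smul_measure ENNReal.ofReal_ne_top).add_measure
      (hi₁.smul_measure ENNReal.ofReal_ne_top)

lemma integrable_mixM {d : ℕ} {ν₀ ν₁ : Measure (Ed d)} {f : Ed d → ℝ} {l : ℝ}
    (h₀ : Integrable f ν₀) (h₁ : Integrable f ν₁) : Integrable f (mixM ν₀ ν₁ l) :=
  (h₀.smul_measure ENNReal.ofReal_ne_top).add_measure
    (h₁.smul_measure ENNReal.ofReal_ne_top)

lemma integral_mixM {d : ℕ} {ν₀ ν₁ : Measure (Ed d)} {f : Ed d → ℝ} {l : ℝ}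
    (hl : 0 ≤ l) (hl1 : l ≤ 1) (h₀ : Integrable f ν₀) (h₁ : Integrable f ν₁) :
    ∫ x, f x ∂(mixM ν₀ ν₁ l) = (1 - l) * ∫ x, f x ∂ν₀ + l * ∫ x, f x ∂ν₁ := by
  rw [mixM, integral_add_measure (h₀.smul_measure ENNReal.ofReal_ne_top)
    (h₁.smul_measure ENNReal.ofReal_ne_top), integral_smul_measure, integral_smul_measure,
    ENNReal.toReal_ofReal (by linarith), ENNReal.toReal_ofReal hl]
  simp [smul_eq_mul]

lemma mixM_zero {d : ℕ} (ν₀ ν₁ : Measure (Ed d)) : mixM ν₀ ν₁ 0 = ν₀ := by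
  simp [mixM]

lemma mixM_one {d : ℕ} (ν₀ ν₁ : Measure (Ed d)) : mixM ν₀ ν₁ 1 = ν₁ := by
  simp [mixM]

lemma mixM_right {d : ℕ} (ν₀ ν₁ : Measure (Ed d)) {l e : ℝ}
    (hl : 0 ≤ l) (hl1 : l ≤ 1) (he : 0 ≤ e) (he1 : e ≤ 1) :
    mixM (mixM ν₀ ν₁ l) ν₁ e = mixM ν₀ ν₁ (l + e * (1 - l)) := by
  rw [mixM, mixM, mixM, smul_add, smul_smul, smul_smul, add_assoc,
    ← ENNReal.ofReal_mul (by linarith), ← ENNReal.ofReal_mul (by linarith),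
    ← add_smul, ← ENNReal.ofReal_add (mul_nonneg (show (0:ℝ) ≤ 1 - e by linarith) hl) he]
  congr 2 <;> ring

lemma mixM_left {d : ℕ} (ν₀ ν₁ : Measure (Ed d)) {l e : ℝ}
    (hl : 0 ≤ l) (hl1 : l ≤ 1) (he : 0 ≤ e) (he1 : e ≤ 1) :
    mixM (mixM ν₀ ν₁ l) ν₀ e = mixM ν₀ ν₁ (l * (1 - e)) := by
  rw [mixM, mixM, mixM, smul_add, smul_smul, smul_smul,
    ← ENNReal.ofReal_mul (by linarith), ← ENNReal.ofReal_mul (by linarith)]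
  rw [add_right_comm, ← add_smul, ← ENNReal.ofReal_add (mul_nonneg (show (0:ℝ) ≤ 1 - e by linarith) (show (0:ℝ) ≤ 1 - l by linarith)) he]
  congr 2 <;> ring

lemma W2sq_nonneg {d : ℕ} (μ ν : Measure (Ed d)) : 0 ≤ W2sq μ ν := by
  apply Real.sInf_nonneg
  rintro r ⟨γ, -, -, rfl⟩
  positivity

lemma W2_nonneg {d : ℕ} (μ ν : Measure (Ed d)) : 0 ≤ W2 μ ν := Real.sqrt_nonneg _

lemma costCont {d : ℕ} : Continuous (fun p : Ed d × Ed d => ‖p.1 - p.2‖ ^ 2) :=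
  (continuous_fst.sub continuous_snd).norm.pow 2

lemma W2sq_le {d : ℕ} {μ ν : Measure (Ed d)} {γ : Measure (Ed d × Ed d)}
    (h : IsCoupling γ μ ν) (hi : Integrable (fun p => ‖p.1 - p.2‖ ^ 2) γ) :
    W2sq μ ν ≤ ∫ p, ‖p.1 - p.2‖ ^ 2 ∂γ := by
  apply csInf_le
  · exact ⟨0, by rintro r ⟨γ', -, -, rfl⟩; positivity⟩
  · exact ⟨γ, h, hi, rfl⟩

lemma W2sq_self {d : ℕ} (μ : Measure (Ed d)) : W2sq μ μ = 0 := by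
  refine le_antisymm ?_ (W2sq_nonneg μ μ)
  have hmeas : Measurable (fun x : Ed d => (x, x)) := measurable_id.prodMk measurable_id
  have hcoup : IsCoupling (μ.map (fun x => (x, x))) μ μ := by
    constructor
    · rw [Measure.map_map measurable_fst hmeas]; exact Measure.map_id
    · rw [Measure.map_map measurable_snd hmeas]; exact Measure.map_id
  have hint : Integrable (fun p : Ed d × Ed d => ‖p.1 - p.2‖ ^ 2) (μ.map (fun x => (x, x))) := by
    rw [integrable_map_measure costCont.aestronglyMeasurable hmeas.aemeasurable]
    exact (integrable_zero _ ℝ μ).congr (ae_of_all _ fun x => by simp [Function.comp])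
  have := W2sq_le hcoup hint
  rw [integral_map hmeas.aemeasurable costCont.aestronglyMeasurable] at this
  simpa using this

lemma W2_self {d : ℕ} (μ : Measure (Ed d)) : W2 μ μ = 0 := by
  rw [W2, W2sq_self, Real.sqrt_zero]

lemma W2sq_symm {d : ℕ} (μ ν : Measure (Ed d)) : W2sq μ ν = W2sq ν μ := by
  have key : ∀ (α β : Measure (Ed d)) (r : ℝ),
      (∃ γ, IsCoupling γ α β ∧ Integrable (fun p : Ed d × Ed d => ‖p.1 - p.2‖ ^ 2) γ ∧
        r = ∫ p, ‖p.1 - p.2‖ ^ 2 ∂γ) →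
      (∃ γ, IsCoupling γ β α ∧ Integrable (fun p : Ed d × Ed d => ‖p.1 - p.2‖ ^ 2) γ ∧
        r = ∫ p, ‖p.1 - p.2‖ ^ 2 ∂γ) := by
    rintro α β r ⟨γ, ⟨h1, h2⟩, hi, rfl⟩
    refine ⟨γ.map Prod.swap, ⟨?_, ?_⟩, ?_, ?_⟩
    · rw [Measure.map_map measurable_fst measurable_swap]; exact h2
    · rw [Measure.map_map measurable_snd measurable_swap]; exact h1
    · rw [integrable_map_measure costCont.aestronglyMeasurable measurable_swap.aemeasurable]
      apply hi.congr
      filter_upwards with p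
      simp [Function.comp, norm_sub_rev]
    · rw [integral_map measurable_swap.aemeasurable costCont.aestronglyMeasurable]
      apply integral_congr_ae
      filter_upwards with p
      simp [norm_sub_rev p.2 p.1]
  unfold W2sq
  congr 1
  ext r
  exact ⟨key μ ν r, key ν μ r⟩


lemma W2sq_mix_le {d : ℕ} {μ : Measure (Ed d)} {T₀ T₁ : Ed d → Ed d}
    (h₀ : Measurable T₀) (h₁ : Measurable T₁)
    (hi₀ : Integrable (fun x => ‖T₀ x - x‖ ^ 2) μ)
    (hi₁ : Integrable (fun x => ‖T₁ x - x‖ ^ 2) μ)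
    {l : ℝ} (hl : 0 ≤ l) (hl1 : l ≤ 1) :
    W2sq (mixM (μ.map T₀) (μ.map T₁) l) μ
      ≤ (1 - l) * ∫ x, ‖T₀ x - x‖ ^ 2 ∂μ + l * ∫ x, ‖T₁ x - x‖ ^ 2 ∂μ := by
  set γ : Measure (Ed d × Ed d) :=
    ENNReal.ofReal (1 - l) • μ.map (fun x => (T₀ x, x))
      + ENNReal.ofReal l • μ.map (fun x => (T₁ x, x)) with hγ
  have hm₀ : Measurable (fun x => (T₀ x, x)) := h₀.prodMk measurable_id
  have hm₁ : Measurable (fun x => (T₁ x, x)) := h₁.prodMk measurable_id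
  have hcoup : IsCoupling γ (mixM (μ.map T₀) (μ.map T₁) l) μ := by
    constructor
    · rw [hγ, Measure.map_add _ _ measurable_fst, Measure.map_smul, Measure.map_smul,
        Measure.map_map measurable_fst hm₀, Measure.map_map measurable_fst hm₁]
      rfl
    · rw [hγ, Measure.map_add _ _ measurable_snd, Measure.map_smul, Measure.map_smul,
        Measure.map_map measurable_snd hm₀, Measure.map_map measurable_snd hm₁]
      show ENNReal.ofReal (1 - l) • μ.map id + ENNReal.ofReal l • μ.map id = μ
      rw [Measure.map_id, ← add_smul, ← ENNReal.ofReal_add (by linarith) hl]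
      norm_num
  have hci₀ : Integrable (fun p : Ed d × Ed d => ‖p.1 - p.2‖ ^ 2) (μ.map (fun x => (T₀ x, x))) := by
    rw [integrable_map_measure costCont.aestronglyMeasurable hm₀.aemeasurable]
    exact hi₀
  have hci₁ : Integrable (fun p : Ed d × Ed d => ‖p.1 - p.2‖ ^ 2) (μ.map (fun x => (T₁ x, x))) := by
    rw [integrable_map_measure costCont.aestronglyMeasurable hm₁.aemeasurable]
    exact hi₁
  have hint : Integrable (fun p : Ed d × Ed d => ‖p.1 - p.2‖ ^ 2) γ :=
    (hci₀.smul_measure ENNReal.ofReal_ne_top).add_measure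
      (hci₁.smul_measure ENNReal.ofReal_ne_top)
  refine le_trans (W2sq_le hcoup hint) (le_of_eq ?_)
  rw [hγ, integral_add_measure (hci₀.smul_measure ENNReal.ofReal_ne_top)
      (hci₁.smul_measure ENNReal.ofReal_ne_top),
    integral_smul_measure, integral_smul_measure,
    ENNReal.toReal_ofReal (by linarith), ENNReal.toReal_ofReal hl,
    integral_map hm₀.aemeasurable costCont.aestronglyMeasurable,
    integral_map hm₁.aemeasurable costCont.aestronglyMeasurable]
  simp [smul_eq_mul]

lemma right_deriv {d : ℕ} {F : Measure (Ed d) → ℝ} {DF : Measure (Ed d) → Ed d → ℝ}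
    (hflat : IsFlatDeriv F DF) {ν₀ ν₁ : Measure (Ed d)} (h₀ : P2 ν₀) (h₁ : P2 ν₁)
    {l : ℝ} (hl : 0 ≤ l) (hl1 : l < 1)
    (hi₀ : Integrable (DF (mixM ν₀ ν₁ l)) ν₀) (hi₁ : Integrable (DF (mixM ν₀ ν₁ l)) ν₁) :
    HasDerivWithinAt (fun s => F (mixM ν₀ ν₁ s))
      ((∫ x, DF (mixM ν₀ ν₁ l) x ∂ν₁) - ∫ x, DF (mixM ν₀ ν₁ l) x ∂ν₀) (Ici l) l := by
  have h1l : (0:ℝ) < 1 - l := by linarith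
  set m := mixM ν₀ ν₁ l with hm
  have hmP2 : P2 m := mixM_P2 h₀ h₁ hl hl1.le
  have hc : ∫ x, DF m x ∂m = 0 := hflat.centered m hmP2
  have hsplit : (1 - l) * ∫ x, DF m x ∂ν₀ + l * ∫ x, DF m x ∂ν₁ = 0 := by
    rw [← integral_mixM hl hl1.le hi₀ hi₁]; exact hc
  have hD : (∫ x, DF m x ∂ν₁) - ∫ x, DF m x ∂ν₀ = (1 - l)⁻¹ * ∫ x, DF m x ∂ν₁ := by
    rw [eq_comm, inv_mul_eq_iff_eq_mul₀ (by linarith)]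
    linear_combination hsplit
  have hlim := hflat.limit m ν₁ hmP2 h₁
  rw [hc, sub_zero] at hlim
  rw [hasDerivWithinAt_iff_tendsto_slope, Set.Ici_sdiff_left, hD]
  set e : ℝ → ℝ := fun s => (s - l) / (1 - l) with hedef
  have he : Tendsto e (𝓝[>] l) (𝓝[>] (0:ℝ)) := by
    apply tendsto_nhdsWithin_of_tendsto_nhds_of_eventually_within
    · have hc2 : Continuous e := (continuous_id.sub continuous_const).div_const _
      have := hc2.tendsto l
      simpa [hedef] using this.mono_left nhdsWithin_le_nhds
    · filter_upwards [self_mem_nhdsWithin] with s hs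
      exact div_pos (sub_pos.2 hs) h1l
  have key := (hlim.comp he).const_mul (1 - l)⁻¹
  apply Tendsto.congr' _ key
  filter_upwards [self_mem_nhdsWithin,
    eventually_nhdsWithin_of_eventually_nhds (eventually_lt_nhds hl1)] with s hs hs1
  have hsl : l < s := hs
  have hes : mixM m ν₁ (e s) = mixM ν₀ ν₁ s := by
    rw [hm, mixM_right ν₀ ν₁ hl hl1.le (le_of_lt (div_pos (sub_pos.2 hsl) h1l))
      (by rw [div_le_one h1l]; linarith)]
    congr 1
    field_simp
    ring
  show (1 - l)⁻¹ * ((F (ENNReal.ofReal (1 - e s) • m + ENNReal.ofReal (e s) • ν₁) - F m) / e s)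
      = slope (fun s => F (mixM ν₀ ν₁ s)) l s
  have : (ENNReal.ofReal (1 - e s) • m + ENNReal.ofReal (e s) • ν₁) = mixM ν₀ ν₁ s := hes
  rw [this, slope_def_field]
  rw [hedef]
  have hsl' : s - l ≠ 0 := sub_ne_zero.mpr hsl.ne'
  have h1l' : (1:ℝ) - l ≠ 0 := ne_of_gt h1l
  field_simp
  rfl

lemma left_cont {d : ℕ} {F : Measure (Ed d) → ℝ} {DF : Measure (Ed d) → Ed d → ℝ}
    (hflat : IsFlatDeriv F DF) {ν₀ ν₁ : Measure (Ed d)} (h₀ : P2 ν₀) (h₁ : P2 ν₁)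
    {l : ℝ} (hl : 0 < l) (hl1 : l ≤ 1) :
    ContinuousWithinAt (fun s => F (mixM ν₀ ν₁ s)) (Iic l) l := by
  set m := mixM ν₀ ν₁ l with hm
  have hmP2 : P2 m := mixM_P2 h₀ h₁ hl.le hl1
  have hlim := hflat.limit m ν₀ hmP2 h₀
  set e : ℝ → ℝ := fun s => (l - s) / l with hedef
  have he : Tendsto e (𝓝[<] l) (𝓝[>] (0:ℝ)) := by
    apply tendsto_nhdsWithin_of_tendsto_nhds_of_eventually_within
    · have hc2 : Continuous e := (continuous_const.sub continuous_id).div_const _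
      have := hc2.tendsto l
      simpa [hedef] using this.mono_left nhdsWithin_le_nhds
    · filter_upwards [self_mem_nhdsWithin] with s hs
      exact div_pos (sub_pos.2 hs) hl
  have he0 : Tendsto e (𝓝[<] l) (𝓝 (0:ℝ)) := he.mono_right nhdsWithin_le_nhds
  have key := he0.mul (hlim.comp he)
  rw [zero_mul] at key
  have key2 : Tendsto (fun s => F (mixM ν₀ ν₁ s) - F m) (𝓝[<] l) (𝓝 0) := by
    apply Tendsto.congr' _ key
    filter_upwards [self_mem_nhdsWithin,
      eventually_nhdsWithin_of_eventually_nhds (eventually_gt_nhds hl)] with s hs hs0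
    have hsl : s < l := hs
    have hes : (ENNReal.ofReal (1 - e s) • m + ENNReal.ofReal (e s) • ν₀) = mixM ν₀ ν₁ s := by
      show mixM m ν₀ (e s) = _
      rw [hm, mixM_left ν₀ ν₁ hl.le hl1 (le_of_lt (div_pos (sub_pos.2 hsl) hl))
        (by rw [div_le_one hl]; linarith)]
      congr 1
      field_simp
      ring
    show e s * ((F (ENNReal.ofReal (1 - e s) • m + ENNReal.ofReal (e s) • ν₀) - F m) / e s)
        = F (mixM ν₀ ν₁ s) - F m
    rw [hes]
    have : e s ≠ 0 := ne_of_gt (div_pos (sub_pos.2 hsl) hl)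
    field_simp
  have key3 : Tendsto (fun s => F (mixM ν₀ ν₁ s)) (𝓝[<] l) (𝓝 (F m)) := by
    have := key2.add_const (F m)
    simpa using this
  show Tendsto _ (𝓝[Iic l] l) _
  rw [← Set.Iio_union_right, nhdsWithin_union]
  rw [tendsto_sup]
  exact ⟨key3, by rw [nhdsWithin_singleton]; exact tendsto_pure_nhds _ _⟩

def Tm {d : ℕ} (P : Ed d → Ed d) (s : ℝ) : Ed d → Ed d := fun x => x + s • (P x - x)

lemma Tm_meas {d : ℕ} {P : Ed d → Ed d} (hP : Measurable P) (s : ℝ) :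
    Measurable (Tm P s) :=
  measurable_id.add ((hP.sub measurable_id).const_smul s)

lemma Tm_sub {d : ℕ} (P : Ed d → Ed d) (s : ℝ) (x : Ed d) :
    Tm P s x - x = s • (P x - x) := by
  simp [Tm]

lemma norm_Tm_sub {d : ℕ} (P : Ed d → Ed d) (s : ℝ) (x : Ed d) :
    ‖Tm P s x - x‖ = |s| * ‖P x - x‖ := by
  rw [Tm_sub, norm_smul, Real.norm_eq_abs]

lemma Tm_zero {d : ℕ} (P : Ed d → Ed d) : Tm P 0 = fun x => x := by
  funext x; simp [Tm]

lemma Tm_one {d : ℕ} (P : Ed d → Ed d) : Tm P 1 = P := by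
  funext x; simp [Tm]

lemma norm_Tm_sq_le {d : ℕ} (P : Ed d → Ed d) (s : ℝ) (x : Ed d) :
    ‖Tm P s x‖ ^ 2 ≤ 2 * ‖x‖ ^ 2 + 2 * s ^ 2 * ‖P x - x‖ ^ 2 := by
  have h1 : ‖Tm P s x‖ ≤ ‖x‖ + |s| * ‖P x - x‖ := by
    calc ‖Tm P s x‖ ≤ ‖x‖ + ‖s • (P x - x)‖ := norm_add_le _ _
    _ = ‖x‖ + |s| * ‖P x - x‖ := by rw [norm_smul, Real.norm_eq_abs]
  nlinarith [norm_nonneg (Tm P s x), norm_nonneg x, norm_nonneg (P x - x), abs_nonneg s,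
    sq_nonneg (‖x‖ - |s| * ‖P x - x‖), sq_abs s]

section Main

variable {d : ℕ} {F : Measure (Ed d) → ℝ} {DF : Measure (Ed d) → Ed d → ℝ}
  {gradDF : Measure (Ed d) → Ed d → Ed d} {C L : ℝ}
  {μ : Measure (Ed d)} {P : Ed d → Ed d}

lemma DF_cont (hgrad : ∀ (ν : Measure (Ed d)) (x : Ed d), P2 ν → HasGradientAt (DF ν) (gradDF ν x) x)
    {m : Measure (Ed d)} (hm : P2 m) : Continuous (DF m) :=
  continuous_iff_continuousAt.2 fun x => (hgrad m x hm).hasFDerivAt.differentiableAt.continuousAt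

lemma gradDF_cont (hgradlip : GradLip gradDF L) (hμ : P2 μ) (hL0 : 0 ≤ L) :
    Continuous (gradDF μ) := by
  apply (LipschitzWith.of_dist_le_mul (K := L.toNNReal) (f := gradDF μ) ?_).continuous
  intro x y
  rw [dist_eq_norm, dist_eq_norm]
  have := hgradlip μ μ y x hμ hμ
  rw [W2_self] at this
  calc ‖gradDF μ x - gradDF μ y‖ ≤ L * (‖x - y‖ + 0) := this
  _ ≤ L.toNNReal * ‖x - y‖ := by
      rw [add_zero, Real.coe_toNNReal L hL0]

-- Integrability of x ↦ DF m (Tm P s x) with respect to μ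
lemma integrable_DF_Tm
    (hgrad : ∀ (ν : Measure (Ed d)) (x : Ed d), P2 ν → HasGradientAt (DF ν) (gradDF ν x) x)
    {κ : ℝ} (hκ : ∀ (ν : Measure (Ed d)) (x : Ed d), P2 ν → |DF ν x| ≤ κ * (1 + ‖x‖ ^ 2))
    {m : Measure (Ed d)} (hm : P2 m) (hP : Measurable P)
    [IsFiniteMeasure μ] (hx2 : Integrable (fun x => ‖x‖ ^ 2) μ) (hv2 : Integrable (fun x => ‖P x - x‖ ^ 2) μ)
    (s : ℝ) : Integrable (fun x => DF m (Tm P s x)) μ := by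
  have hmeas : AEStronglyMeasurable (fun x => DF m (Tm P s x)) μ :=
    ((DF_cont hgrad hm).measurable.comp (Tm_meas hP s)).aestronglyMeasurable
  refine Integrable.mono' (g := fun x => |κ| * (1 + (2 * ‖x‖ ^ 2 + 2 * s ^ 2 * ‖P x - x‖ ^ 2)))
    ?_ hmeas ?_
  · apply Integrable.const_mul
    apply Integrable.add (integrable_const 1)
    exact (hx2.const_mul 2).add (hv2.const_mul (2 * s ^ 2))
  · filter_upwards with x
    rw [Real.norm_eq_abs]
    calc |DF m (Tm P s x)| ≤ κ * (1 + ‖Tm P s x‖ ^ 2) := hκ m _ hm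
    _ ≤ |κ| * (1 + (2 * ‖x‖ ^ 2 + 2 * s ^ 2 * ‖P x - x‖ ^ 2)) := by
        apply mul_le_mul (le_abs_self κ) ?_ (by positivity) (abs_nonneg κ)
        have := norm_Tm_sq_le P s x
        linarith

lemma P2_map_Tm (hμ : P2 μ) (hP : Measurable P)
    (hv2 : Integrable (fun x => ‖P x - x‖ ^ 2) μ) {s : ℝ} (hs1 : |s| ≤ 1) :
    P2 (μ.map (Tm P s)) := by
  have hT := Tm_meas hP s
  constructor
  · have : IsProbabilityMeasure μ := hμ.1
    exact Measure.isProbabilityMeasure_map hT.aemeasurable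
  · rw [integrable_map_measure (g := fun x : Ed d => ‖x‖ ^ 2) (continuous_norm.pow 2).aestronglyMeasurable hT.aemeasurable]
    refine Integrable.mono' (g := fun x => 2 * ‖x‖ ^ 2 + 2 * s ^ 2 * ‖P x - x‖ ^ 2)
      ?_ ((continuous_norm.pow 2).measurable.comp hT).aestronglyMeasurable ?_
    · exact (hμ.2.const_mul 2).add (hv2.const_mul (2 * s ^ 2))
    · filter_upwards with x
      simp only [Function.comp_apply]
      rw [Real.norm_eq_abs, abs_of_nonneg (by positivity)]
      exact norm_Tm_sq_le P s x

end Main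

section Main2

variable {d : ℕ} {F : Measure (Ed d) → ℝ} {DF : Measure (Ed d) → Ed d → ℝ}
  {gradDF : Measure (Ed d) → Ed d → Ed d} {C L : ℝ}
  {μ : Measure (Ed d)} {P : Ed d → Ed d}

lemma segment_le
    (hflat : IsFlatDeriv F DF)
    (hgrad : ∀ (ν : Measure (Ed d)) (x : Ed d), P2 ν → HasGradientAt (DF ν) (gradDF ν x) x)
    (hgradbd : ∀ (ν : Measure (Ed d)) (x : Ed d), P2 ν → ‖gradDF ν x‖ ≤ C)
    (hgradlip : GradLip gradDF L) (hL0 : 0 ≤ L)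
    (hμ : P2 μ) (hP : Measurable P)
    (hv2 : Integrable (fun x => ‖P x - x‖ ^ 2) μ)
    {t h : ℝ} (ht : 0 ≤ t) (hh : 0 < h) (hth : t + h ≤ 1) :
    F (μ.map (Tm P (t + h))) ≤ F (μ.map (Tm P t))
      + h * (∫ x, ⟪gradDF μ x, P x - x⟫ ∂μ)
      + 2 * L * (∫ x, ‖P x - x‖ ^ 2 ∂μ) * (h * (t + h)) := by
  haveI : IsProbabilityMeasure μ := hμ.1
  have hx2 := hμ.2
  obtain ⟨κ, hκ0, hκ⟩ := hflat.growth
  set M : ℝ := ∫ x, ‖P x - x‖ ^ 2 ∂μ with hMdef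
  set A : ℝ := ∫ x, ⟪gradDF μ x, P x - x⟫ ∂μ with hAdef
  set ν₀ : Measure (Ed d) := μ.map (Tm P t) with hν₀def
  set ν₁ : Measure (Ed d) := μ.map (Tm P (t + h)) with hν₁def
  have hν₀ : P2 ν₀ := P2_map_Tm hμ hP hv2 (by rw [abs_of_nonneg ht]; linarith)
  have hν₁ : P2 ν₁ := P2_map_Tm hμ hP hv2 (by rw [abs_of_nonneg (by linarith : (0:ℝ) ≤ t + h)]; exact hth)
  have hM0 : 0 ≤ M := integral_nonneg fun x => by positivity
  have hmP2 : ∀ l : ℝ, 0 ≤ l → l ≤ 1 → P2 (mixM ν₀ ν₁ l) := fun l a b => mixM_P2 hν₀ hν₁ a b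
  -- integrability of DF m with respect to pushforwards
  have hintDF : ∀ (m : Measure (Ed d)), P2 m → ∀ s : ℝ, Integrable (DF m) (μ.map (Tm P s)) := by
    intro m hm s
    rw [integrable_map_measure (DF_cont hgrad hm).aestronglyMeasurable (Tm_meas hP s).aemeasurable]
    exact integrable_DF_Tm hgrad hκ hm hP hx2 hv2 s
  have hintμ : ∀ (m : Measure (Ed d)), P2 m → ∀ s : ℝ,
      Integrable (fun x => DF m (Tm P s x)) μ := fun m hm s =>
    integrable_DF_Tm hgrad hκ hm hP hx2 hv2 s
  -- cost identity
  have hcost : ∀ s : ℝ, Integrable (fun x => ‖Tm P s x - x‖ ^ 2) μ ∧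
      ∫ x, ‖Tm P s x - x‖ ^ 2 ∂μ = s ^ 2 * M := by
    intro s
    have hfun : (fun x => ‖Tm P s x - x‖ ^ 2) = fun x => s ^ 2 * ‖P x - x‖ ^ 2 := by
      funext x; rw [norm_Tm_sub, mul_pow, sq_abs]
    constructor
    · rw [hfun]; exact hv2.const_mul _
    · rw [hfun, integral_const_mul]
  -- W2 bound
  have hW2 : ∀ l : ℝ, 0 ≤ l → l ≤ 1 → W2 (mixM ν₀ ν₁ l) μ ≤ (t + h) * Real.sqrt M := by
    intro l hl0 hl1
    have hsq := W2sq_mix_le (μ := μ) (Tm_meas hP t) (Tm_meas hP (t + h))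
      (hcost t).1 (hcost (t + h)).1 hl0 hl1
    rw [(hcost t).2, (hcost (t + h)).2] at hsq
    have hsq2 : W2sq (mixM ν₀ ν₁ l) μ ≤ (t + h) ^ 2 * M := by
      refine le_trans hsq ?_
      have hsq' : t ^ 2 ≤ (t + h) ^ 2 := by nlinarith
      nlinarith [mul_nonneg (sub_nonneg.2 hl1) (mul_nonneg (sub_nonneg.2 hsq') hM0)]
    rw [W2]
    calc Real.sqrt (W2sq (mixM ν₀ ν₁ l) μ) ≤ Real.sqrt ((t + h) ^ 2 * M) :=
          Real.sqrt_le_sqrt hsq2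
    _ = (t + h) * Real.sqrt M := by
        rw [Real.sqrt_mul (sq_nonneg _), Real.sqrt_sq (by linarith)]
  -- integrability of the inner product term
  have hGc : Continuous (gradDF μ) := gradDF_cont hgradlip hμ hL0
  have hC0 : 0 ≤ C := le_trans (norm_nonneg _) (hgradbd μ 0 hμ)
  have hiA : Integrable (fun x => ⟪gradDF μ x, P x - x⟫) μ := by
    refine Integrable.mono' (g := fun x => C * (1 + ‖P x - x‖ ^ 2)) ?_ ?_ ?_
    · exact (((integrable_const (1:ℝ)).add hv2).const_mul C)
    · exact (hGc.measurable.inner (hP.sub measurable_id)).aestronglyMeasurable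
    · filter_upwards with x
      calc ‖⟪gradDF μ x, P x - x⟫‖ ≤ ‖gradDF μ x‖ * ‖P x - x‖ := norm_inner_le_norm _ _
      _ ≤ C * (1 + ‖P x - x‖ ^ 2) := by
          have h1 := hgradbd μ x hμ
          nlinarith [norm_nonneg (P x - x), norm_nonneg (gradDF μ x),
            sq_nonneg (1 - ‖P x - x‖)]
  -- derivative bound
  set c₂ : ℝ := h * A + 2 * L * M * (h * (t + h)) with hc₂def
  have hb : ∀ l ∈ Ico (0:ℝ) 1,
      (∫ x, DF (mixM ν₀ ν₁ l) x ∂ν₁) - ∫ x, DF (mixM ν₀ ν₁ l) x ∂ν₀ ≤ c₂ := by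
    intro l hl
    set m : Measure (Ed d) := mixM ν₀ ν₁ l with hmdef
    have hm : P2 m := hmP2 l hl.1 hl.2.le
    have hWm : W2 m μ ≤ (t + h) * Real.sqrt M := hW2 l hl.1 hl.2.le
    have e1 : ∫ x, DF m x ∂ν₁ = ∫ x, DF m (Tm P (t + h) x) ∂μ := by
      rw [hν₁def, integral_map (Tm_meas hP (t + h)).aemeasurable
        (DF_cont hgrad hm).aestronglyMeasurable]
    have e0 : ∫ x, DF m x ∂ν₀ = ∫ x, DF m (Tm P t x) ∂μ := by
      rw [hν₀def, integral_map (Tm_meas hP t).aemeasurable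
        (DF_cont hgrad hm).aestronglyMeasurable]
    -- pointwise estimate
    have hpt : ∀ x : Ed d, DF m (Tm P (t + h) x) - DF m (Tm P t x)
        ≤ h * ⟪gradDF μ x, P x - x⟫
          + h * (L * (t + h) * (‖P x - x‖ ^ 2 + (M + ‖P x - x‖ ^ 2) / 2)) := by
      intro x
      set v : Ed d := P x - x with hvdef
      set cx : ℝ := ⟪gradDF μ x, v⟫ with hcxdef
      set Cx : ℝ := L * (t + h) * (‖v‖ ^ 2 + (M + ‖v‖ ^ 2) / 2) with hCxdef
      set ψ : ℝ → ℝ := fun s => DF m (Tm P s x) - s * cx with hψdef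
      have hψd : ∀ s ∈ Icc t (t + h),
          HasDerivWithinAt ψ (⟪gradDF m (Tm P s x) - gradDF μ x, v⟫) (Icc t (t + h)) s := by
        intro s hs
        have hcurve : HasDerivAt (fun s : ℝ => x + s • (P x - x)) (P x - x) s := by
          have h1 : HasDerivAt (fun s : ℝ => s • (P x - x)) ((1:ℝ) • (P x - x)) s :=
            (hasDerivAt_id s).smul_const _
          simpa using h1.const_add x
        have hfd := (hgrad m (Tm P s x) hm).hasFDerivAt.comp_hasDerivAt s hcurve
        have hc2' : HasDerivAt (fun s : ℝ => s * cx) cx s := hasDerivAt_mul_const cx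
        have hsub := hfd.sub hc2'
        have hval : (InnerProductSpace.toDual ℝ (Ed d) (gradDF m (Tm P s x))) (P x - x) - cx
            = ⟪gradDF m (Tm P s x) - gradDF μ x, v⟫ := by
          rw [InnerProductSpace.toDual_apply_apply, inner_sub_left]
        rw [hval] at hsub
        exact hsub.hasDerivWithinAt
      have hbound : ∀ s ∈ Icc t (t + h),
          ‖⟪gradDF m (Tm P s x) - gradDF μ x, v⟫‖ ≤ Cx := by
        intro s hs
        have hs0 : 0 ≤ s := le_trans ht hs.1
        calc ‖⟪gradDF m (Tm P s x) - gradDF μ x, v⟫‖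
            ≤ ‖gradDF m (Tm P s x) - gradDF μ x‖ * ‖v‖ := norm_inner_le_norm _ _
        _ ≤ (L * (‖Tm P s x - x‖ + W2 m μ)) * ‖v‖ :=
            mul_le_mul_of_nonneg_right (hgradlip μ m x (Tm P s x) hμ hm) (norm_nonneg v)
        _ ≤ Cx := by
            have h1 : ‖Tm P s x - x‖ ≤ (t + h) * ‖v‖ := by
              rw [norm_Tm_sub, abs_of_nonneg hs0]
              exact mul_le_mul_of_nonneg_right hs.2 (norm_nonneg _)
            have h3 : Real.sqrt M * ‖v‖ ≤ (M + ‖v‖ ^ 2) / 2 := by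
              nlinarith [sq_nonneg (Real.sqrt M - ‖v‖), Real.sq_sqrt hM0]
            have hth0 : (0:ℝ) ≤ t + h := by linarith
            have hW0 : 0 ≤ W2 m μ := W2_nonneg _ _
            have key1 : ‖Tm P s x - x‖ + W2 m μ ≤ (t + h) * ‖v‖ + (t + h) * Real.sqrt M := by
              linarith [hWm]
            have key2 : (L * (‖Tm P s x - x‖ + W2 m μ)) * ‖v‖
                ≤ (L * ((t + h) * ‖v‖ + (t + h) * Real.sqrt M)) * ‖v‖ := by
              apply mul_le_mul_of_nonneg_right _ (norm_nonneg v)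
              exact mul_le_mul_of_nonneg_left key1 hL0
            refine le_trans key2 ?_
            rw [hCxdef]
            have expand : (L * ((t + h) * ‖v‖ + (t + h) * Real.sqrt M)) * ‖v‖
                = L * (t + h) * (‖v‖ ^ 2 + Real.sqrt M * ‖v‖) := by ring
            rw [expand]
            apply mul_le_mul_of_nonneg_left _ (mul_nonneg hL0 hth0)
            linarith
      have hmvt := Convex.norm_image_sub_le_of_norm_hasDerivWithin_le hψd hbound
        (convex_Icc t (t + h)) (left_mem_Icc.2 (by linarith)) (right_mem_Icc.2 (by linarith))
      rw [Real.norm_eq_abs, Real.norm_eq_abs] at hmvt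
      have habs : ψ (t + h) - ψ t ≤ Cx * |t + h - t| := le_trans (le_abs_self _) hmvt
      rw [show t + h - t = h by ring, abs_of_pos hh] at habs
      rw [hψdef] at habs
      simp only at habs
      have hCx0 : Cx * h = h * (L * (t + h) * (‖v‖ ^ 2 + (M + ‖v‖ ^ 2) / 2)) := by
        rw [hCxdef]; ring
      rw [hCx0] at habs
      rw [hcxdef] at habs
      linarith
    -- integrate the pointwise estimate
    have hRHSint : Integrable (fun x => h * ⟪gradDF μ x, P x - x⟫
        + ((h * (L * (t + h)) * (3 / 2)) * ‖P x - x‖ ^ 2 + h * (L * (t + h)) / 2 * M)) μ :=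
      (hiA.const_mul h).add ((hv2.const_mul _).add (integrable_const _))
    calc (∫ x, DF m x ∂ν₁) - ∫ x, DF m x ∂ν₀
        = ∫ x, (DF m (Tm P (t + h) x) - DF m (Tm P t x)) ∂μ := by
          rw [e1, e0, integral_sub (hintμ m hm (t + h)) (hintμ m hm t)]
    _ ≤ ∫ x, (h * ⟪gradDF μ x, P x - x⟫
          + ((h * (L * (t + h)) * (3 / 2)) * ‖P x - x‖ ^ 2 + h * (L * (t + h)) / 2 * M)) ∂μ := by
          apply integral_mono ((hintμ m hm (t + h)).sub (hintμ m hm t)) hRHSint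
          intro x
          calc DF m (Tm P (t + h) x) - DF m (Tm P t x)
              ≤ h * ⟪gradDF μ x, P x - x⟫
                + h * (L * (t + h) * (‖P x - x‖ ^ 2 + (M + ‖P x - x‖ ^ 2) / 2)) := hpt x
          _ = h * ⟪gradDF μ x, P x - x⟫
                + ((h * (L * (t + h)) * (3 / 2)) * ‖P x - x‖ ^ 2
                  + h * (L * (t + h)) / 2 * M) := by ring
    _ = c₂ := by
        have I1 : ∫ x, (h * ⟪gradDF μ x, P x - x⟫
              + ((h * (L * (t + h)) * (3 / 2)) * ‖P x - x‖ ^ 2 + h * (L * (t + h)) / 2 * M)) ∂μ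
            = (∫ x, h * ⟪gradDF μ x, P x - x⟫ ∂μ)
              + ∫ x, ((h * (L * (t + h)) * (3 / 2)) * ‖P x - x‖ ^ 2
                  + h * (L * (t + h)) / 2 * M) ∂μ :=
          integral_add (hiA.const_mul h) ((hv2.const_mul _).add (integrable_const _))
        have I2 : ∫ x, ((h * (L * (t + h)) * (3 / 2)) * ‖P x - x‖ ^ 2
              + h * (L * (t + h)) / 2 * M) ∂μ
            = (∫ x, (h * (L * (t + h)) * (3 / 2)) * ‖P x - x‖ ^ 2 ∂μ)
              + ∫ _x, (h * (L * (t + h)) / 2 * M : ℝ) ∂μ :=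
          integral_add (hv2.const_mul _) (integrable_const _)
        rw [I1, I2, integral_const_mul, integral_const_mul, integral_const]
        simp only [measure_univ, ENNReal.toReal_one, probReal_univ, smul_eq_mul, one_mul]
        rw [hc₂def, hAdef, hMdef]
        ring
  -- continuity of g on [0,1]
  set g : ℝ → ℝ := fun l => F (mixM ν₀ ν₁ l) with hgdef
  have hderiv : ∀ l ∈ Ico (0:ℝ) 1, HasDerivWithinAt g
      ((∫ x, DF (mixM ν₀ ν₁ l) x ∂ν₁) - ∫ x, DF (mixM ν₀ ν₁ l) x ∂ν₀) (Ici l) l := by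
    intro l hl
    exact right_deriv hflat hν₀ hν₁ hl.1 hl.2
      (by rw [hν₀def]; exact hintDF _ (hmP2 l hl.1 hl.2.le) t)
      (by rw [hν₁def]; exact hintDF _ (hmP2 l hl.1 hl.2.le) (t + h))
  have hcont : ContinuousOn g (Icc 0 1) := by
    intro l hl
    rcases lt_or_eq_of_le hl.2 with hl1 | hl1
    · have hr : ContinuousWithinAt g (Ici l) l :=
        (hderiv l ⟨hl.1, hl1⟩).continuousWithinAt
      rcases eq_or_lt_of_le hl.1 with hl0 | hl0
      · exact hr.mono (fun y hy => by rw [← hl0] at *; exact hy.1)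
      · have hle : ContinuousWithinAt g (Iic l) l := left_cont hflat hν₀ hν₁ hl0 hl.2
        exact (hle.union hr).mono (fun y _ => by
          rcases le_total y l with h' | h'
          · exact Or.inl h'
          · exact Or.inr h')
    · subst hl1
      have hle : ContinuousWithinAt g (Iic 1) 1 := left_cont hflat hν₀ hν₁ one_pos le_rfl
      exact hle.mono (fun y hy => hy.2)
  -- fencing
  have hfence : ∀ ⦃l : ℝ⦄, l ∈ Icc (0:ℝ) 1 → g l ≤ g 0 + c₂ * l := by
    apply image_le_of_deriv_right_le_deriv_boundary hcont hderiv
    · simp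
    · exact (continuous_const.add (continuous_const.mul continuous_id)).continuousOn
    · intro l _
      have : HasDerivAt (fun l : ℝ => g 0 + c₂ * l) c₂ l := by
        simpa using ((hasDerivAt_id l).const_mul c₂).const_add (g 0)
      exact this.hasDerivWithinAt
    · exact hb
  have := hfence (right_mem_Icc.2 zero_le_one)
  rw [hgdef] at this
  simp only at this
  rw [mixM_one, mixM_zero, mul_one] at this
  rw [hν₁def, hν₀def] at this
  linarith

end Main2

section Main3

variable {d : ℕ} {F : Measure (Ed d) → ℝ} {DF : Measure (Ed d) → Ed d → ℝ}
  {gradDF : Measure (Ed d) → Ed d → Ed d} {C L : ℝ}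
  {μ μ' : Measure (Ed d)} {P : Ed d → Ed d}

lemma chain_le
    (hflat : IsFlatDeriv F DF)
    (hgrad : ∀ (ν : Measure (Ed d)) (x : Ed d), P2 ν → HasGradientAt (DF ν) (gradDF ν x) x)
    (hgradbd : ∀ (ν : Measure (Ed d)) (x : Ed d), P2 ν → ‖gradDF ν x‖ ≤ C)
    (hgradlip : GradLip gradDF L) (hL0 : 0 ≤ L)
    (hμ : P2 μ) (hP : Measurable P)
    (hv2 : Integrable (fun x => ‖P x - x‖ ^ 2) μ)
    (n : ℕ) (hn : 0 < n) :
    ∀ k : ℕ, k ≤ n → F (μ.map (Tm P ((k : ℝ) / n))) ≤ F (μ.map (Tm P 0))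
      + ((k : ℝ) / n) * (∫ x, ⟪gradDF μ x, P x - x⟫ ∂μ)
      + L * (∫ x, ‖P x - x‖ ^ 2 ∂μ) * ((k : ℝ) * ((k : ℝ) + 1)) / (n : ℝ) ^ 2 := by
  have hn0 : (0:ℝ) < (n : ℝ) := Nat.cast_pos.2 hn
  set A : ℝ := ∫ x, ⟪gradDF μ x, P x - x⟫ ∂μ
  set M : ℝ := ∫ x, ‖P x - x‖ ^ 2 ∂μ
  intro k
  induction k with
  | zero => intro _; simp
  | succ k ih =>
    intro hk1
    have hk : k ≤ n := le_trans (Nat.le_succ k) hk1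
    have ihk := ih hk
    have hth : (k : ℝ) / n + 1 / n ≤ 1 := by
      rw [← add_div, div_le_one hn0]
      push_cast
      exact_mod_cast Nat.cast_le.2 hk1
    have hseg := segment_le hflat hgrad hgradbd hgradlip hL0 hμ hP hv2
      (t := (k : ℝ) / n) (h := 1 / n) (by positivity) (by positivity) hth
    have hcast : (k : ℝ) / n + 1 / n = ((k + 1 : ℕ) : ℝ) / n := by
      push_cast; ring
    rw [hcast] at hseg
    push_cast
    push_cast at ihk
    have harith : ((k:ℝ)/n) * A + L * M * ((k:ℝ) * ((k:ℝ) + 1)) / (n:ℝ)^2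
        + ((1/(n:ℝ)) * A + 2 * L * M * ((1/(n:ℝ)) * (((k:ℝ)+1)/(n:ℝ))))
        = (((k:ℝ)+1)/(n:ℝ)) * A + L * M * (((k:ℝ)+1) * (((k:ℝ)+1)+1)) / (n:ℝ)^2 := by
      field_simp
      ring
    have hcast2 : ((k + 1 : ℕ) : ℝ) = (k:ℝ) + 1 := by push_cast; ring
    rw [hcast2] at hseg
    linarith [hseg, ihk]

lemma main_ineq
    (hflat : IsFlatDeriv F DF)
    (hgrad : ∀ (ν : Measure (Ed d)) (x : Ed d), P2 ν → HasGradientAt (DF ν) (gradDF ν x) x)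
    (hgradbd : ∀ (ν : Measure (Ed d)) (x : Ed d), P2 ν → ‖gradDF ν x‖ ≤ C)
    (hgradlip : GradLip gradDF L) (hL0 : 0 ≤ L)
    (hμ : P2 μ) (hμ' : P2 μ') (hP : Measurable P) (hmap : μ.map P = μ') :
    F μ' - F μ - ∫ x, ⟪gradDF μ x, P x - x⟫ ∂μ ≤ L * ∫ x, ‖P x - x‖ ^ 2 ∂μ := by
  haveI : IsProbabilityMeasure μ := hμ.1
  -- integrability of ‖P x - x‖²
  have hPx2 : Integrable (fun x => ‖P x‖ ^ 2) μ := by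
    have := hμ'.2
    rw [← hmap, integrable_map_measure (g := fun x : Ed d => ‖x‖ ^ 2) (continuous_norm.pow 2).aestronglyMeasurable
      hP.aemeasurable] at this
    exact this
  have hv2 : Integrable (fun x => ‖P x - x‖ ^ 2) μ := by
    refine Integrable.mono' (g := fun x => 2 * ‖P x‖ ^ 2 + 2 * ‖x‖ ^ 2)
      ((hPx2.const_mul 2).add (hμ.2.const_mul 2))
      ((continuous_norm.pow 2).measurable.comp (hP.sub measurable_id)).aestronglyMeasurable ?_
    filter_upwards with x
    rw [Real.norm_eq_abs, abs_of_nonneg (by positivity)]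
    have h1 : ‖P x - x‖ ≤ ‖P x‖ + ‖x‖ := norm_sub_le _ _
    nlinarith [norm_nonneg (P x - x), norm_nonneg (P x), norm_nonneg x,
      sq_nonneg (‖P x‖ - ‖x‖)]
  set A : ℝ := ∫ x, ⟪gradDF μ x, P x - x⟫ ∂μ
  set M : ℝ := ∫ x, ‖P x - x‖ ^ 2 ∂μ
  have hM0 : 0 ≤ M := integral_nonneg fun x => by positivity
  have hkey : ∀ n : ℕ, 0 < n → F μ' - F μ - A ≤ L * M * ((n:ℝ) * ((n:ℝ) + 1)) / (n:ℝ) ^ 2 := by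
    intro n hn
    have := chain_le hflat hgrad hgradbd hgradlip hL0 hμ hP hv2 n hn n le_rfl
    have hn0 : (0:ℝ) < (n:ℝ) := Nat.cast_pos.2 hn
    rw [div_self (ne_of_gt hn0), Tm_one, Tm_zero, hmap] at this
    have hid : μ.map (fun x => x) = μ := Measure.map_id
    rw [hid] at this
    linarith
  refine le_of_forall_pos_le_add fun ε hε => ?_
  have hLM0 : 0 ≤ L * M := mul_nonneg hL0 hM0
  obtain ⟨n, hn⟩ := exists_nat_gt (L * M / ε)
  have hn1 : 0 < n := by
    by_contra hcon
    push_neg at hcon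
    interval_cases n
    · simp at hn
      nlinarith [div_nonneg hLM0 hε.le]
  have hn0 : (0:ℝ) < (n:ℝ) := Nat.cast_pos.2 hn1
  have h1 := hkey n hn1
  have h2 : L * M * ((n:ℝ) * ((n:ℝ) + 1)) / (n:ℝ) ^ 2 = L * M + L * M / n := by
    field_simp
  have h3 : L * M / n < ε := by
    rw [div_lt_iff₀ hn0]
    calc L * M = (L * M / ε) * ε := by field_simp
    _ < (n:ℝ) * ε := mul_lt_mul_of_pos_right hn hε
    _ = ε * n := mul_comm _ _
  linarith

end Main3

/-- **Smoothness of `F` relative to `W₂²`** (Lemma 6.5). If `F ∈ C¹` is Wasserstein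
differentiable with bounded, jointly continuous and `L_F'`-Lipschitz gradient
`∇_μF(μ) = ∇(δF/δμ)(μ,·)`, then for all `μ, μ' ∈ P₂(ℝ^d)` and every measurable
pushforward map `P` with `P_#μ = μ'`,
`F(μ') - F(μ) - ⟨∇_μF(μ), P - Id⟩_{L²_μ} ≤ L_F' ∫ ‖x - P(x)‖² μ(dx)`, and if `P` is an
optimal transport map from `μ` to `μ'` then `∫ ‖x - P(x)‖² μ(dx) = W₂²(μ',μ)`. -/
theorem F_smooth_relative_W2sq {d : ℕ}
    (F : Measure (Ed d) → ℝ) (DF : Measure (Ed d) → Ed d → ℝ)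
    (gradDF : Measure (Ed d) → Ed d → Ed d) (C_F' L_F' : ℝ)
    -- F ∈ C¹ with flat derivative DF
    (hflat : IsFlatDeriv F DF)
    -- Wasserstein differentiability of F with bounded, jointly continuous gradient
    (hgrad : ∀ (μ : Measure (Ed d)) (x : Ed d), P2 μ → HasGradientAt (DF μ) (gradDF μ x) x)
    (hgradbd : ∀ (μ : Measure (Ed d)) (x : Ed d), P2 μ → ‖gradDF μ x‖ ≤ C_F')
    (hgradcont : GradJointCont gradDF)
    -- Lipschitzness of the Wasserstein gradient
    (hgradlip : GradLip gradDF L_F') :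
    ∀ μ μ' : Measure (Ed d), P2 μ → P2 μ' →
      ∀ P : Ed d → Ed d, Measurable P → μ.map P = μ' →
        (F μ' - F μ - ∫ x, ⟪gradDF μ x, P x - x⟫ ∂μ
            ≤ L_F' * ∫ x, ‖x - P x‖ ^ 2 ∂μ) ∧
        (IsOptimalMap μ μ' P → ∫ x, ‖x - P x‖ ^ 2 ∂μ = W2sq μ' μ) := by
  intro μ μ' hμ hμ' P hP hmap
  constructor
  · have hrw : (fun x : Ed d => ‖x - P x‖ ^ 2) = fun x => ‖P x - x‖ ^ 2 := by
      funext x; rw [norm_sub_rev]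
    rw [hrw]
    rcases Nat.eq_zero_or_pos d with hd | hd
    · subst hd
      haveI : Subsingleton (Ed 0) := ⟨fun a b => (WithLp.ext_iff 2).2 (funext fun i => i.elim0)⟩
      have hPid : P = fun x => x := funext fun x => Subsingleton.elim _ _
      have hμ'eq : μ' = μ := by rw [← hmap, hPid]; exact Measure.map_id
      rw [hμ'eq, hPid]
      simp
    · have hL0 : 0 ≤ L_F' := by
        set x' : Ed d := EuclideanSpace.single (⟨0, hd⟩ : Fin d) (1:ℝ) with hx'def
        have hx : ‖x' - 0‖ = 1 := by
          rw [sub_zero, hx'def, EuclideanSpace.norm_single, norm_one]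
        have hlip := hgradlip μ μ 0 x' hμ hμ
        rw [W2_self, hx] at hlip
        nlinarith [norm_nonneg (gradDF μ x' - gradDF μ 0)]
      exact main_ineq hflat hgrad hgradbd hgradlip hL0 hμ hμ' hP hmap
  · intro hopt
    rw [W2sq_symm]
    exact hopt.2.2.2
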